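/- For every real k and every r ≥ 0, the inequality |(1 − i k r) e^{i k r} − 1| ≤ k² r² holds. -/

import Mathlib

/-! The function `f(t) = (1 - i t) e^{i t}` has `f(0) = 1` and `f'(t) = t e^{i t}`, so
`|f'(s)| = |s| ≤ |t|` between `0` and `t`, and the mean value inequality gives
`|f(t) - 1| ≤ |t| · |t| = t²`. Apply this with `t = k r`. -/

open Complex

theorem hasDerivAt_one_sub_I_mul_mul_exp_I_mul (t : ℝ) :
    HasDerivAt (fun s : ℝ => (1 - I * s) * exp (I * s)) (t * exp (I * t)) t := by
  have hIs : HasDerivAt (fun s : ℝ => I * s) I t := by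
    simpa using ofRealCLM.hasDerivAt.const_mul I
  refine ((hIs.const_sub 1).mul hIs.cexp).congr_deriv ?_
  linear_combination (-(t : ℂ) * exp (I * t)) * I_mul_I

theorem norm_one_sub_I_mul_mul_exp_I_mul_sub_one_le (t : ℝ) :
    ‖(1 - I * t) * exp (I * t) - 1‖ ≤ t ^ 2 := by
  have hderiv_le : ∀ s ∈ Metric.closedBall (0 : ℝ) |t|, ‖(s : ℂ) * exp (I * s)‖ ≤ |t| := by
    intro s hs
    simpa [norm_exp_I_mul_ofReal] using hs
  have hmvt := (convex_closedBall (0 : ℝ) |t|).norm_image_sub_le_of_norm_hasDerivWithin_le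
    (fun s _ => (hasDerivAt_one_sub_I_mul_mul_exp_I_mul s).hasDerivWithinAt) hderiv_le
    (Metric.mem_closedBall_self (abs_nonneg t)) (y := t) (by simp)
  simpa [← sq, sq_abs] using hmvt

theorem exp_taylor_estimate_general (k r : ℝ) :
    ‖(1 - Complex.I * k * r) * Complex.exp (Complex.I * k * r) - 1‖ ≤ k ^ 2 * r ^ 2 := by
  simpa [mul_assoc, mul_pow] using norm_one_sub_I_mul_mul_exp_I_mul_sub_one_le (k * r)

theorem exp_taylor_estimate (k r : ℝ) (hr : 0 ≤ r) :
    ‖(1 - Complex.I * k * r) * Complex.exp (Complex.I * k * r) - 1‖ ≤ k ^ 2 * r ^ 2 :=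
  exp_taylor_estimate_general k r
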